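/- The restriction of the lexicographic order < to S is well-founded; hence induction along < over S is valid. -/
import Mathlib

/-- The `<` relation on energies of elements of `S` is well-founded, by Gromov compactness. -/
lemma energy_wf (G : Type*) (E : G → ℝ) (S : Set (ℕ × ℕ × G))
    (hGromov : ∀ E₀ : ℝ, {β : G | (∃ k ℓ, (k, ℓ, β) ∈ S) ∧ E β ≤ E₀}.Finite) :
    WellFounded (fun x y : {r : ℝ // ∃ β, (∃ k ℓ, (k, ℓ, β) ∈ S) ∧ E β = r} =>
      x.1 < y.1) := by
  haveI : IsStrictOrder {r : ℝ // ∃ β, (∃ k ℓ, (k, ℓ, β) ∈ S) ∧ E β = r}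
      (fun x y => x.1 < y.1) :=
    { irrefl := fun a => lt_irrefl _
      trans := fun a b c hab hbc => lt_trans hab hbc }
  rw [RelEmbedding.wellFounded_iff_isEmpty]
  constructor
  intro emb
  set f : ℕ → {r : ℝ // ∃ β, (∃ k ℓ, (k, ℓ, β) ∈ S) ∧ E β = r} := fun n => emb n with hf
  have hanti : StrictAnti (fun n => (f n).1) := by
    intro m n hmn
    exact emb.map_rel_iff.2 hmn
  choose β hβS hβE using fun n => (f n).2
  have hmem : ∀ n, β n ∈ {β : G | (∃ k ℓ, (k, ℓ, β) ∈ S) ∧ E β ≤ (f 0).1} := by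
    intro n
    refine ⟨hβS n, ?_⟩
    rw [hβE n]
    rcases Nat.eq_zero_or_pos n with h | h
    · rw [h]
    · exact (hanti h).le
  have hinj : Function.Injective β := by
    intro m n h
    by_contra hne
    rcases lt_or_gt_of_ne hne with hlt | hlt
    · exact absurd ((hβE m).symm.trans ((congrArg E h).trans (hβE n)))
        (ne_of_gt (hanti hlt))
    · exact absurd ((hβE n).symm.trans ((congrArg E h.symm).trans (hβE m)))
        (ne_of_gt (hanti hlt))
  exact (Set.infinite_of_injective_forall_mem hinj hmem) (hGromov (f 0).1)

/-- Under the Gromov compactness assumption, the restriction of the lexicographic order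
(via `(E β, ℓ, k)`) to `S` is well-founded. -/
theorem stmt2 (G : Type*) (E : G → ℝ) (S : Set (ℕ × ℕ × G))
    (hGromov : ∀ E₀ : ℝ, {β : G | (∃ k ℓ, (k, ℓ, β) ∈ S) ∧ E β ≤ E₀}.Finite) :
    WellFounded (fun a b : S =>
      E (a : ℕ × ℕ × G).2.2 < E (b : ℕ × ℕ × G).2.2 ∨
      (E (a : ℕ × ℕ × G).2.2 = E (b : ℕ × ℕ × G).2.2 ∧
        (a : ℕ × ℕ × G).2.1 < (b : ℕ × ℕ × G).2.1) ∨
      (E (a : ℕ × ℕ × G).2.2 = E (b : ℕ × ℕ × G).2.2 ∧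
        (a : ℕ × ℕ × G).2.1 = (b : ℕ × ℕ × G).2.1 ∧
        (a : ℕ × ℕ × G).1 < (b : ℕ × ℕ × G).1)) := by
  set T := {r : ℝ // ∃ β, (∃ k ℓ, (k, ℓ, β) ∈ S) ∧ E β = r} with hT
  have hwfT : WellFounded (fun x y : T => x.1 < y.1) := energy_wf G E S hGromov
  have hwfNN : WellFounded (Prod.Lex (· < · : ℕ → ℕ → Prop) (· < · : ℕ → ℕ → Prop)) :=
    WellFounded.prod_lex (Nat.lt_wfRel.wf) (Nat.lt_wfRel.wf)
  have hwf : WellFounded (Prod.Lex (fun x y : T => x.1 < y.1)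
      (Prod.Lex (· < · : ℕ → ℕ → Prop) (· < · : ℕ → ℕ → Prop))) :=
    WellFounded.prod_lex hwfT hwfNN
  have hφ : ∀ a : S, ∃ β, (∃ k ℓ, (k, ℓ, β) ∈ S) ∧ E β = E (a : ℕ × ℕ × G).2.2 := by
    intro a
    refine ⟨(a : ℕ × ℕ × G).2.2, ⟨(a : ℕ × ℕ × G).1, (a : ℕ × ℕ × G).2.1, ?_⟩, rfl⟩
    simp only [Prod.mk.eta]; exact a.2
  set φ : S → T × ℕ × ℕ := fun a =>
    (⟨E (a : ℕ × ℕ × G).2.2, hφ a⟩, (a : ℕ × ℕ × G).2.1, (a : ℕ × ℕ × G).1) with hφdef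
  refine Subrelation.wf ?_ (InvImage.wf φ hwf)
  intro a b h
  rcases h with h | ⟨hE, hl⟩ | ⟨hE, hl, hk⟩
  · exact Prod.Lex.left _ _ h
  · have : (⟨E (a : ℕ × ℕ × G).2.2, hφ a⟩ : T) = ⟨E (b : ℕ × ℕ × G).2.2, hφ b⟩ :=
      Subtype.ext hE
    show Prod.Lex _ _ (φ a) (φ b)
    simp only [hφdef]
    rw [this]
    exact Prod.Lex.right _ (Prod.Lex.left _ _ hl)
  · have h1 : (⟨E (a : ℕ × ℕ × G).2.2, hφ a⟩ : T) = ⟨E (b : ℕ × ℕ × G).2.2, hφ b⟩ :=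
      Subtype.ext hE
    show Prod.Lex _ _ (φ a) (φ b)
    simp only [hφdef]
    rw [h1, hl]
    exact Prod.Lex.right _ (Prod.Lex.right _ hk)
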